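/- In a friendship digraph of order n with maximum out-degree Δ⁺(D) < n − 1, all vertices have the same out-degree k for some integer k ≥ 2. -/

import Mathlib

/-!
Counting arcs gives `∑ in-degree = ∑ out-degree`. If `¬ D u p`, sending an in-neighbour `v` of `p`
to the common out-neighbour of `v` and `u` injects `N⁻(p)` into `N⁺(u)`; with `u = p` this gives
`d⁻(p) ≤ d⁺(p)`, so in- and out-degrees agree everywhere. Hence a vertex of smaller out-degree
points to every vertex of larger out-degree. If the digraph were not regular, either a single vertex
has smaller out-degree, and it points to all others, or two do, and then their unique common
out-neighbour is the only vertex of maximum degree and receives all other arcs; either way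
`Δ⁺ ≥ n - 1`. Finally the common out-neighbour of two vertices has in-degree, hence out-degree, `≥ 2`.
-/

open Finset

section Degrees

variable {V : Type*} [Fintype V] (D : V → V → Prop) [DecidableRel D]

def outDegree (v : V) : ℕ := #(univ.filter fun w => D v w)

def inDegree (w : V) : ℕ := #(univ.filter fun v => D v w)

def IsFriendship : Prop := ∀ u v : V, u ≠ v → ∃! w : V, D u w ∧ D v w

theorem sum_inDegree_eq_sum_outDegree : ∑ w, inDegree D w = ∑ v, outDegree D v := by
  simp only [inDegree, outDegree, card_filter]
  exact sum_comm

end Degrees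

theorem card_sub_one_le_card_filter {V : Type*} [Fintype V] {p : V → Prop} [DecidablePred p]
    (a : V) (h : ∀ x, x ≠ a → p x) : Fintype.card V - 1 ≤ #(univ.filter p) := by
  classical
  calc Fintype.card V - 1 = #(univ.erase a) := by rw [card_erase_of_mem (mem_univ a), card_univ]
    _ ≤ #(univ.filter p) :=
      card_le_card fun x hx => mem_filter.mpr ⟨mem_univ x, h x (ne_of_mem_erase hx)⟩

namespace IsFriendship

theorem eq_of_rel_of_rel {V : Type*} {D : V → V → Prop} (hD : IsFriendship D) {u v : V}
    (huv : u ≠ v) {p q : V} (hup : D u p) (hvp : D v p) (huq : D u q) (hvq : D v q) : p = q :=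
  (hD u v huv).unique ⟨hup, hvp⟩ ⟨huq, hvq⟩

variable {V : Type*} [Fintype V] {D : V → V → Prop} [DecidableRel D]

theorem inDegree_le_outDegree (hD : IsFriendship D) {u p : V} (hup : ¬ D u p) :
    inDegree D p ≤ outDegree D u := by
  have hne : ∀ v, D v p → v ≠ u := fun v hvp hvu => hup (hvu ▸ hvp)
  choose! c hc using fun v (hvp : D v p) => (hD v u (hne v hvp)).exists
  refine card_le_card_of_injOn c (fun v hv => ?_) fun v hv v' hv' hcc => ?_
  · exact mem_filter.mpr ⟨mem_univ _, (hc v (mem_filter.mp hv).2).2⟩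
  · have hvp := (mem_filter.mp hv).2
    have hv'p := (mem_filter.mp hv').2
    by_contra hvv'
    have hcp : c v = p := hD.eq_of_rel_of_rel hvv' (hc v hvp).1 (hcc ▸ (hc v' hv'p).1) hvp hv'p
    exact hup (hcp ▸ (hc v hvp).2)

theorem inDegree_eq_outDegree (hD : IsFriendship D) (irrefl : ∀ v : V, ¬ D v v) (p : V) :
    inDegree D p = outDegree D p :=
  (sum_eq_sum_iff_of_le fun q _ => hD.inDegree_le_outDegree (irrefl q)).mp
    (sum_inDegree_eq_sum_outDegree D) p (mem_univ p)

theorem rel_of_outDegree_lt (hD : IsFriendship D) (irrefl : ∀ v : V, ¬ D v v) {v w : V}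
    (h : outDegree D v < outDegree D w) : D v w := by
  by_contra hvw
  have := hD.inDegree_le_outDegree hvw
  rw [hD.inDegree_eq_outDegree irrefl] at this
  omega

theorem outDegree_eq_of_max (hD : IsFriendship D) (irrefl : ∀ v : V, ¬ D v v) {k : ℕ}
    (hk : ∀ v, outDegree D v ≤ k) (hkn : k < Fintype.card V - 1) {w : V}
    (hw : outDegree D w = k) (v : V) : outDegree D v = k := by
  by_contra hvk
  have hv : outDegree D v < k := lt_of_le_of_ne (hk v) hvk
  by_cases hlow : ∃ v', v' ≠ v ∧ outDegree D v' < k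
  · obtain ⟨v', hv'v, hv'⟩ := hlow
    have hmax_eq : ∀ x, outDegree D x = k → x = w := fun x hx =>
      hD.eq_of_rel_of_rel hv'v (hD.rel_of_outDegree_lt irrefl (hx ▸ hv'))
        (hD.rel_of_outDegree_lt irrefl (hx ▸ hv)) (hD.rel_of_outDegree_lt irrefl (hw ▸ hv'))
        (hD.rel_of_outDegree_lt irrefl (hw ▸ hv))
    have hin : Fintype.card V - 1 ≤ inDegree D w := card_sub_one_le_card_filter w fun x hxw =>
      hD.rel_of_outDegree_lt irrefl <|
        hw ▸ lt_of_le_of_ne (hk x) fun hx => hxw (hmax_eq x hx)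
    rw [hD.inDegree_eq_outDegree irrefl, hw] at hin
    omega
  · push Not at hlow
    have hout : Fintype.card V - 1 ≤ outDegree D v := card_sub_one_le_card_filter v fun x hxv =>
      hD.rel_of_outDegree_lt irrefl <| (le_antisymm (hk x) (hlow x hxv)).symm ▸ hv
    omega

theorem exists_two_le_inDegree (hD : IsFriendship D) (hV : 1 < Fintype.card V) :
    ∃ w, 2 ≤ inDegree D w := by
  classical
  obtain ⟨u, v, huv⟩ := Fintype.exists_pair_of_one_lt_card hV
  obtain ⟨w, ⟨huw, hvw⟩, -⟩ := hD u v huv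
  refine ⟨w, ?_⟩
  calc 2 = #({u, v} : Finset V) := (card_pair huv).symm
    _ ≤ inDegree D w := card_le_card <| by
      simp only [insert_subset_iff, singleton_subset_iff, mem_filter, mem_univ, true_and]
      exact ⟨huw, hvw⟩

end IsFriendship

theorem friendship_digraph_small_max_outdeg_regular_general
    {V : Type*} [Fintype V] (D : V → V → Prop) [DecidableRel D]
    (irrefl : ∀ v : V, ¬ D v v)
    (friendship : ∀ u v : V, u ≠ v → ∃! w : V, D u w ∧ D v w)
    (nontrivial : 1 < Fintype.card V)
    (hmax : univ.sup (fun v => (univ.filter (fun w => D v w)).card) < Fintype.card V - 1) :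
    ∃ k : ℕ, 2 ≤ k ∧ ∀ v : V, (univ.filter (fun w => D v w)).card = k := by
  have hD : IsFriendship D := friendship
  have : Nonempty V := Fintype.card_pos_iff.mp (by omega)
  obtain ⟨w, -, hw⟩ := exists_mem_eq_sup univ univ_nonempty (outDegree D)
  have hreg : ∀ v, outDegree D v = univ.sup (outDegree D) :=
    hD.outDegree_eq_of_max irrefl (fun v => le_sup (mem_univ v)) hmax hw.symm
  obtain ⟨p, hp⟩ := hD.exists_two_le_inDegree nontrivial
  refine ⟨_, ?_, hreg⟩
  calc 2 ≤ inDegree D p := hp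
    _ = outDegree D p := hD.inDegree_eq_outDegree irrefl p
    _ = _ := hreg p

/-- In a friendship digraph of order `n` with maximum out-degree `Δ⁺(D) < n − 1`,
all vertices have the same out-degree `k` for some integer `k ≥ 2`. -/
theorem friendship_digraph_small_max_outdeg_regular
    {V : Type*} [Fintype V] [DecidableEq V] (D : V → V → Prop) [DecidableRel D]
    (irrefl : ∀ v : V, ¬ D v v)
    (friendship : ∀ u v : V, u ≠ v → ∃! w : V, D u w ∧ D v w)
    (nontrivial : 1 < Fintype.card V)
    (hmax : univ.sup (fun v => (univ.filter (fun w => D v w)).card) < Fintype.card V - 1) :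
    ∃ k : ℕ, 2 ≤ k ∧ ∀ v : V, (univ.filter (fun w => D v w)).card = k :=
  friendship_digraph_small_max_outdeg_regular_general D irrefl friendship nontrivial hmax
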